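/- Let N ≥ 2 be an integer and E_N = {0, 1, …, N−1}. Then the equally-weighted probability measure δ_{E_N} is a spectral measure. Moreover, a countable set C ⊂ ℝ with 0 ∈ C is a spectrum of δ_{E_N} if and only if #C = N and C ≡ {0, 1/N, …, (N−1)/N} (mod ℤ), i.e. the map c ↦ c mod 1 is a bijection from C onto {0, 1/N, …, (N−1)/N}. -/

import Mathlib

open MeasureTheory Filter Complex

/-- The equally-weighted (uniform) probability measure on a finite set `E ⊆ ℝ`. -/
noncomputable def unifD (E : Finset ℝ) : Measure ℝ :=
  (E.card : ENNReal)⁻¹ • ∑ e ∈ E, Measure.dirac e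

/-- Iterated convolutions `ν_n = δ_{A 1} ∗ ⋯ ∗ δ_{A n}` (with `ν_0 = δ_0`). -/
noncomputable def convSeq (A : ℕ → Finset ℝ) : ℕ → Measure ℝ
  | 0 => Measure.dirac 0
  | n + 1 => (convSeq A n).conv (unifD (A (n + 1)))

/-- Weak convergence of a sequence of measures on ℝ: integrals of bounded continuous
functions converge. -/
def WeakTendsto (μs : ℕ → Measure ℝ) (μ : Measure ℝ) : Prop :=
  ∀ f : BoundedContinuousFunction ℝ ℝ,
    Tendsto (fun n => ∫ x, f x ∂(μs n)) atTop (nhds (∫ x, f x ∂μ))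

/-- The scaled digit set `(1/(b_1 ⋯ b_k)) D_k` where `D_k = {0, 1, …, N_k - 1}`. -/
noncomputable def digitSet (b N : ℕ → ℕ) (k : ℕ) : Finset ℝ :=
  (Finset.range (N k)).image fun j : ℕ => (j : ℝ) / ∏ i ∈ Finset.Icc 1 k, (b i : ℝ)

/-- `μ_n = δ_{(1/b_1)D_1} ∗ ⋯ ∗ δ_{(1/(b_1⋯b_n))D_n}`. -/
noncomputable def moran (b N : ℕ → ℕ) : ℕ → Measure ℝ :=
  convSeq (digitSet b N)

/-- `moranBlock b N k n = δ_{(1/(b_1⋯b_k))D_k} ∗ ⋯ ∗ δ_{(1/(b_1⋯b_n))D_n}`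
(equal to `δ_0` when `n < k`). -/
noncomputable def moranBlock (b N : ℕ → ℕ) (k : ℕ) : ℕ → Measure ℝ
  | 0 => Measure.dirac 0
  | n + 1 =>
    if k ≤ n + 1 then (moranBlock b N k n).conv (unifD (digitSet b N (n + 1)))
    else Measure.dirac 0

/-- The exponential `x ↦ e^{2πiλx}` as an element of `L²(μ)` (defined to be `0`
in the degenerate case where it is not in `L²`, which never happens for a
finite measure). -/
noncomputable def expLp (μ : Measure ℝ) (l : ℝ) : Lp ℂ 2 μ := by
  classical
  exact if h : MemLp (fun x : ℝ => Complex.exp (2 * Real.pi * Complex.I * l * x)) 2 μ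
    then h.toLp _ else 0

/-- `Λ` is a spectrum of `μ`: it is countable and the exponentials `e^{2πiλx}`, `λ ∈ Λ`,
form an orthonormal basis (orthonormal with dense span) of `L²(μ)`. -/
def IsSpectrum (μ : Measure ℝ) (Λ : Set ℝ) : Prop :=
  Λ.Countable ∧ Orthonormal ℂ (fun l : Λ => expLp μ l) ∧
    ⊤ ≤ (Submodule.span ℂ (Set.range fun l : Λ => expLp μ l)).topologicalClosure

/-- `μ` is a spectral measure. -/
def IsSpectralMeasure (μ : Measure ℝ) : Prop :=
  ∃ Λ : Set ℝ, IsSpectrum μ Λ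

/-- The Fourier transform `μ̂(ξ) = ∫ e^{-2πiξx} dμ(x)`. -/
noncomputable def ft (μ : Measure ℝ) (ξ : ℝ) : ℂ :=
  ∫ x, Complex.exp (-(2 * Real.pi * Complex.I * ξ * x)) ∂μ

/-- The zero set `Z(μ̂)`. -/
def zeroSet (μ : Measure ℝ) : Set ℝ := {ξ : ℝ | ft μ ξ = 0}

/-! `L²(δ_E)` for `E = {0, …, n-1}` is `n`-dimensional (a class is determined by its values at the
`n` atoms), and `⟪e_λ, e_μ⟫ = δ̂_E(λ - μ)` with `δ̂_E(ξ) = n⁻¹ ∑_{j<n} e^{-2πiξj}`, a geometric sum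
that vanishes exactly when `nξ ∈ ℤ` and `ξ ∉ ℤ`. Hence `C` is a spectrum iff it has `n` elements
whose pairwise differences lie in `n⁻¹ℤ \ ℤ`. When `0 ∈ C` this puts `C` inside `n⁻¹ℤ` with
distinct fractional parts, i.e. `Int.fract` maps `C` injectively, hence (by counting)
bijectively, onto `{0, 1/n, …, (n-1)/n}`. -/

open Module Real

section Exponentials

variable {μ : Measure ℝ} [IsFiniteMeasure μ]

lemma memLp_exp_mul (l : ℝ) :
    MemLp (fun x : ℝ => Complex.exp (2 * π * I * l * x)) 2 μ := by
  refine (memLp_top_of_bound (by fun_prop : Continuous _).aestronglyMeasurable 1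
    (Eventually.of_forall fun x => ?_)).mono_exponent le_top
  rw [show (2 * π * I * l * x : ℂ) = ((2 * π * l * x : ℝ) : ℂ) * I by push_cast; ring,
    Complex.norm_exp_ofReal_mul_I]

lemma expLp_ae_eq (l : ℝ) :
    expLp μ l =ᵐ[μ] fun x : ℝ => Complex.exp (2 * π * I * l * x) := by
  rw [expLp, dif_pos (memLp_exp_mul l)]
  exact MemLp.coeFn_toLp _

lemma inner_expLp_expLp (l m : ℝ) : inner ℂ (expLp μ l) (expLp μ m) = ft μ (l - m) := by
  rw [L2.inner_def, ft]
  refine integral_congr_ae ?_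
  filter_upwards [expLp_ae_eq l, expLp_ae_eq m] with x hl hm
  rw [hl, hm, RCLike.inner_apply', ← Complex.exp_conj, ← Complex.exp_add]
  simp only [map_mul, Complex.conj_I, Complex.conj_ofReal, map_ofNat]
  push_cast
  ring_nf

end Exponentials

lemma ft_zero (μ : Measure ℝ) [IsProbabilityMeasure μ] : ft μ 0 = 1 := by
  simp [ft]

lemma orthonormal_expLp_iff {μ : Measure ℝ} [IsProbabilityMeasure μ] (Λ : Set ℝ) :
    Orthonormal ℂ (fun l : Λ => expLp μ l) ↔ Λ.Pairwise fun l m => ft μ (l - m) = 0 := by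
  classical
  simp only [orthonormal_iff_ite, inner_expLp_expLp, Set.Pairwise, Subtype.forall,
    Subtype.mk.injEq]
  refine ⟨fun h l hl m hm hlm => by simpa [hlm] using h l hl m hm, fun h l hl m hm => ?_⟩
  split_ifs with hlm
  · rw [hlm, sub_self, ft_zero]
  · exact h hl hm hlm

lemma isSpectrum_iff_orthonormal_and_ncard_eq_finrank {μ : Measure ℝ}
    [FiniteDimensional ℂ (Lp ℂ 2 μ)] (Λ : Set ℝ) :
    IsSpectrum μ Λ ↔
      Orthonormal ℂ (fun l : Λ => expLp μ l) ∧ Λ.ncard = finrank ℂ (Lp ℂ 2 μ) := by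
  by_cases hon : Orthonormal ℂ (fun l : Λ => expLp μ l)
  · have hli := hon.linearIndependent
    have := hli.finite
    cases nonempty_fintype Λ
    have hcard :
        Λ.ncard = finrank ℂ (Submodule.span ℂ (Set.range fun l : Λ => expLp μ l)) := by
      rw [finrank_span_eq_card hli, ← Nat.card_coe_set_eq, Nat.card_eq_fintype_card]
    simp only [IsSpectrum, Set.to_countable, hon, true_and, hcard,
      ← Submodule.eq_top_iff_finrank_eq, top_le_iff,
      (Submodule.span ℂ _).closed_of_finiteDimensional.submodule_topologicalClosure_eq]
  · simp [IsSpectrum, hon]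

section Uniform

variable (E : Finset ℝ)

lemma unifD_apply (s : Set ℝ) :
    unifD E s = (E.card : ENNReal)⁻¹ * ∑ e ∈ E, s.indicator 1 e := by
  simp [unifD, Measure.dirac_apply]

instance : IsFiniteMeasure (unifD E) := by
  refine ⟨?_⟩
  simpa [unifD_apply] using (ENNReal.inv_mul_le_one _).trans_lt ENNReal.one_lt_top

lemma isProbabilityMeasure_unifD (hE : E.Nonempty) : IsProbabilityMeasure (unifD E) := by
  refine ⟨?_⟩
  simpa [unifD_apply] using
    ENNReal.inv_mul_cancel (by simpa using hE.ne_empty) (ENNReal.natCast_ne_top _)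

lemma unifD_singleton {e : ℝ} (he : e ∈ E) : unifD E {e} = (E.card : ENNReal)⁻¹ := by
  simp [unifD_apply, Set.indicator_apply, he]

lemma ae_unifD_iff {p : ℝ → Prop} : (∀ᵐ x ∂unifD E, p x) ↔ ∀ e ∈ E, p e := by
  simp [ae_iff, unifD_apply]

lemma ft_unifD (ξ : ℝ) :
    ft (unifD E) ξ = (E.card : ℂ)⁻¹ * ∑ e ∈ E, Complex.exp (-(2 * π * I * ξ * e)) := by
  simp [ft, unifD, integral_smul_measure,
    integral_finsetSum_measure fun e _ => integrable_dirac (by simp), integral_dirac]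

noncomputable def atomValues : Lp ℂ 2 (unifD E) →ₗ[ℂ] (E → ℂ) :=
  LinearMap.pi fun e => innerₛₗ ℂ
    (indicatorConstLp 2 (measurableSet_singleton (e : ℝ)) (measure_ne_top _ _) (1 : ℂ))

lemma atomValues_injective : Function.Injective (atomValues E) := by
  refine (injective_iff_map_eq_zero _).2 fun f hf => ?_
  have hval : ∀ e ∈ E, f e = 0 := fun e he => by
    have h := congr_fun hf ⟨e, he⟩
    simp only [atomValues, LinearMap.pi_apply, innerₛₗ_apply_apply,
      L2.inner_indicatorConstLp_one, integral_singleton, Pi.zero_apply] at h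
    simpa [measureReal_def, unifD_singleton E he, (Finset.card_pos.2 ⟨e, he⟩).ne'] using h
  rw [Lp.eq_zero_iff_ae_eq_zero]
  filter_upwards [(ae_unifD_iff E).2 hval] with x hx using hx

instance : FiniteDimensional ℂ (Lp ℂ 2 (unifD E)) :=
  .of_injective _ (atomValues_injective E)

lemma finrank_Lp_unifD_le : finrank ℂ (Lp ℂ 2 (unifD E)) ≤ E.card :=
  (LinearMap.finrank_le_finrank_of_injective (atomValues_injective E)).trans (by simp)

end Uniform

lemma geom_sum_eq_zero_iff_of_ne_zero {K : Type*} [Field K] [CharZero K] {x : K} {n : ℕ}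
    (hn : n ≠ 0) : ∑ i ∈ Finset.range n, x ^ i = 0 ↔ x ^ n = 1 ∧ x ≠ 1 := by
  by_cases hx : x = 1
  · simp [hx, hn]
  · rw [geom_sum_eq hx, div_eq_zero_iff, sub_eq_zero, sub_eq_zero]
    simp [hx]

lemma exp_neg_two_pi_I_mul_eq_one_iff (t : ℝ) :
    Complex.exp (-(2 * π * I * t)) = 1 ↔ ∃ k : ℤ, t = k := by
  rw [Complex.exp_neg, inv_eq_one, Complex.exp_eq_one_iff]
  simp [mul_comm _ (2 * π * I : ℂ), ← Complex.ofReal_intCast]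

lemma ft_unifD_range (n : ℕ) (ξ : ℝ) :
    ft (unifD ((Finset.range n).image fun j : ℕ => (j : ℝ))) ξ =
      (n : ℂ)⁻¹ * ∑ j ∈ Finset.range n, Complex.exp (-(2 * π * I * ξ)) ^ j := by
  rw [ft_unifD, Finset.card_image_of_injective _ Nat.cast_injective, Finset.card_range,
    Finset.sum_image fun i _ j _ h => Nat.cast_injective h]
  congr 1
  refine Finset.sum_congr rfl fun j _ => ?_
  rw [← Complex.exp_nat_mul]
  push_cast
  ring_nf

lemma ft_unifD_range_eq_zero_iff {n : ℕ} (hn : n ≠ 0) (ξ : ℝ) :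
    ft (unifD ((Finset.range n).image fun j : ℕ => (j : ℝ))) ξ = 0 ↔
      (∃ k : ℤ, n * ξ = k) ∧ ¬∃ k : ℤ, ξ = k := by
  rw [ft_unifD_range, mul_eq_zero, inv_eq_zero, Nat.cast_eq_zero, or_iff_right hn,
    geom_sum_eq_zero_iff_of_ne_zero hn, ← Complex.exp_nat_mul,
    show (n : ℂ) * -(2 * π * I * ξ) = -(2 * π * I * (n * ξ : ℝ)) by push_cast; ring,
    ne_eq, exp_neg_two_pi_I_mul_eq_one_iff, exp_neg_two_pi_I_mul_eq_one_iff]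

def unitGrid (n : ℕ) : Set ℝ := (fun j : ℕ => (j : ℝ) / n) '' {j | j < n}

lemma finite_unitGrid (n : ℕ) : (unitGrid n).Finite :=
  (Set.finite_lt_nat n).image _

lemma ncard_unitGrid {n : ℕ} (hn : n ≠ 0) : (unitGrid n).ncard = n := by
  rw [unitGrid, Set.ncard_image_of_injective _ fun i j h => by
    simpa [div_left_inj' (Nat.cast_ne_zero.2 hn : (n : ℝ) ≠ 0)] using h]
  exact Set.ncard_Iio_nat n

lemma fract_mem_unitGrid_iff {n : ℕ} (hn : n ≠ 0) (c : ℝ) :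
    Int.fract c ∈ unitGrid n ↔ ∃ k : ℤ, n * c = k := by
  have hn' : (0 : ℝ) < n := by positivity
  constructor
  · rintro ⟨j, -, hj⟩
    refine ⟨j + n * ⌊c⌋, ?_⟩
    rw [Int.fract, eq_sub_iff_add_eq, div_add' _ _ _ hn'.ne', div_eq_iff hn'.ne'] at hj
    push_cast
    linarith
  · rintro ⟨k, hk⟩
    have hm : ((k - n * ⌊c⌋ : ℤ) : ℝ) = n * Int.fract c := by
      rw [Int.fract]; push_cast; linarith
    have hm0 : 0 ≤ k - n * ⌊c⌋ := by
      have := mul_nonneg hn'.le (Int.fract_nonneg c)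
      exact_mod_cast hm ▸ this
    have hmn : k - n * ⌊c⌋ < n := by
      have := mul_lt_mul_of_pos_left (Int.fract_lt_one c) hn'
      rw [mul_one, ← hm] at this
      exact_mod_cast this
    lift k - n * ⌊c⌋ to ℕ using hm0 with m hm'
    refine ⟨m, by exact_mod_cast hmn, ?_⟩
    rw [div_eq_iff hn'.ne', mul_comm]
    exact_mod_cast hm

lemma bijOn_fract_unitGrid (n : ℕ) : Set.BijOn Int.fract (unitGrid n) (unitGrid n) := by
  refine (Set.bijOn_id _).congr ?_
  rintro _ ⟨j, hj, rfl⟩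
  have hn : (0 : ℝ) < n := by exact_mod_cast (Nat.zero_le j).trans_lt hj
  exact (Int.fract_eq_self.2 ⟨by positivity, (div_lt_one hn).2 (by exact_mod_cast hj)⟩).symm

lemma pairwise_of_bijOn_fract {n : ℕ} (hn : n ≠ 0) {C : Set ℝ}
    (h : Set.BijOn Int.fract C (unitGrid n)) :
    C.Pairwise fun c d => (∃ k : ℤ, n * (c - d) = k) ∧ ¬∃ k : ℤ, c - d = k := by
  intro c hc d hd hcd
  obtain ⟨k, hk⟩ := (fract_mem_unitGrid_iff hn c).1 (h.mapsTo hc)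
  obtain ⟨l, hl⟩ := (fract_mem_unitGrid_iff hn d).1 (h.mapsTo hd)
  exact ⟨⟨k - l, by push_cast; rw [mul_sub, hk, hl]⟩,
    fun hint => hcd (h.injOn hc hd (Int.fract_eq_fract.2 hint))⟩

lemma bijOn_fract_of_pairwise {n : ℕ} (hn : n ≠ 0) {C : Set ℝ} (h0 : 0 ∈ C)
    (hC : C.Pairwise fun c d => (∃ k : ℤ, n * (c - d) = k) ∧ ¬∃ k : ℤ, c - d = k)
    (hcard : C.ncard = n) : Set.BijOn Int.fract C (unitGrid n) := by
  have hmaps : Set.MapsTo Int.fract C (unitGrid n) := fun c hc => by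
    refine (fract_mem_unitGrid_iff hn c).2 ?_
    rcases eq_or_ne c 0 with rfl | hc0
    · exact ⟨0, by simp⟩
    · simpa using (hC hc h0 hc0).1
  have hinj : Set.InjOn Int.fract C := fun c hc d hd h =>
    by_contra fun hcd => (hC hc hd hcd).2 (Int.fract_eq_fract.1 h)
  have himage : Int.fract '' C = unitGrid n :=
    Set.eq_of_subset_of_ncard_le hmaps.image_subset
      (by rw [hinj.ncard_image, hcard, ncard_unitGrid hn]) (finite_unitGrid n)
  exact ⟨hmaps, hinj, himage ▸ Set.surjOn_image _ _⟩

lemma isProbabilityMeasure_unifD_range {n : ℕ} (hn : n ≠ 0) :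
    IsProbabilityMeasure (unifD ((Finset.range n).image fun j : ℕ => (j : ℝ))) :=
  isProbabilityMeasure_unifD _ ((Finset.nonempty_range_iff.2 hn).image _)

lemma finrank_Lp_unifD_range {n : ℕ} (hn : n ≠ 0) :
    finrank ℂ (Lp ℂ 2 (unifD ((Finset.range n).image fun j : ℕ => (j : ℝ)))) = n := by
  have := isProbabilityMeasure_unifD_range hn
  refine le_antisymm ((finrank_Lp_unifD_le _).trans (Finset.card_image_le.trans (by simp))) ?_
  set μ := unifD ((Finset.range n).image fun j : ℕ => (j : ℝ)) with hμ
  have hon := (orthonormal_expLp_iff (μ := μ) (unitGrid n)).2 <| by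
    simpa only [hμ, ft_unifD_range_eq_zero_iff hn] using
      pairwise_of_bijOn_fract hn (bijOn_fract_unitGrid n)
  have hli := hon.linearIndependent
  have := hli.finite
  cases nonempty_fintype (unitGrid n)
  rw [← ncard_unitGrid hn, ← Nat.card_coe_set_eq, Nat.card_eq_fintype_card]
  exact hli.fintype_card_le_finrank

lemma isSpectrum_unifD_range_iff {n : ℕ} (hn : n ≠ 0) (C : Set ℝ) :
    IsSpectrum (unifD ((Finset.range n).image fun j : ℕ => (j : ℝ))) C ↔
      (C.Pairwise fun c d => (∃ k : ℤ, n * (c - d) = k) ∧ ¬∃ k : ℤ, c - d = k) ∧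
        C.ncard = n := by
  have := isProbabilityMeasure_unifD_range hn
  simp only [isSpectrum_iff_orthonormal_and_ncard_eq_finrank, orthonormal_expLp_iff,
    ft_unifD_range_eq_zero_iff hn, finrank_Lp_unifD_range hn]

theorem stmt_14 (n : ℕ) (hn : 2 ≤ n) :
    IsSpectralMeasure (unifD ((Finset.range n).image fun j : ℕ => (j : ℝ))) ∧
    ∀ C : Set ℝ, (0 : ℝ) ∈ C →
      (IsSpectrum (unifD ((Finset.range n).image fun j : ℕ => (j : ℝ))) C ↔
        C.ncard = n ∧
          Set.BijOn Int.fract C ((fun j : ℕ => (j : ℝ) / (n : ℝ)) '' {j : ℕ | j < n})) := by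
  have hn0 : n ≠ 0 := by omega
  refine ⟨⟨unitGrid n, ?_⟩, fun C h0 => ?_⟩
  · rw [isSpectrum_unifD_range_iff hn0]
    exact ⟨pairwise_of_bijOn_fract hn0 (bijOn_fract_unitGrid n), ncard_unitGrid hn0⟩
  · rw [isSpectrum_unifD_range_iff hn0]
    exact ⟨fun ⟨hC, hcard⟩ => ⟨hcard, bijOn_fract_of_pairwise hn0 h0 hC hcard⟩,
      fun ⟨hcard, hbij⟩ => ⟨pairwise_of_bijOn_fract hn0 hbij, hcard⟩⟩
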